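/- Let α² = 1 - c·α₁² with c > 0, √c·α₁ ≤ 1, h > 0, β ∈ ℝ. Then log H_{α,h}^β ≥ log(e^β·(1 - √(1-e^{-4h})/2)) + log(1 - √c·α₁ - c·α₁²·e^{-4h}/(2√(1-e^{-4h}))), where H_{α,h}^β = e^β·(1 - (√(1-α²)+√(1-e^{-4h}α²))/2). -/
import Mathlib


theorem Hnorm_log_lower_bound (c α₁ h β : ℝ)
    (hc : 0 < c) (hα₁ : 0 ≤ α₁) (hcα : Real.sqrt c * α₁ ≤ 1) (hh : 0 < h)
    (hpos : 0 < 1 - Real.sqrt c * α₁ -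
      c * α₁ ^ 2 * Real.exp (-4 * h) / (2 * Real.sqrt (1 - Real.exp (-4 * h)))) :
    Real.log (Real.exp β *
        (1 - (Real.sqrt (1 - (1 - c * α₁ ^ 2)) +
          Real.sqrt (1 - Real.exp (-4 * h) * (1 - c * α₁ ^ 2))) / 2)) ≥
      Real.log (Real.exp β * (1 - Real.sqrt (1 - Real.exp (-4 * h)) / 2)) +
      Real.log (1 - Real.sqrt c * α₁ -
        c * α₁ ^ 2 * Real.exp (-4 * h) / (2 * Real.sqrt (1 - Real.exp (-4 * h)))) := by
  set e := Real.exp (-4 * h) with he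
  have he0 : 0 < e := Real.exp_pos _
  have he1 : e < 1 := by
    rw [he, Real.exp_lt_one_iff]; nlinarith
  set s := Real.sqrt (1 - e) with hs
  have hs0 : 0 < s := Real.sqrt_pos.mpr (by linarith)
  have hs1 : s ≤ 1 := by
    rw [hs]; exact Real.sqrt_le_one.mpr (by linarith)
  have hssq : s ^ 2 = 1 - e := Real.sq_sqrt (by linarith)
  have hca : 0 ≤ Real.sqrt c * α₁ := mul_nonneg (Real.sqrt_nonneg c) hα₁
  set D := c * α₁ ^ 2 * e / (2 * s) with hD
  have hD0 : 0 ≤ D := by positivity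
  have h1 : Real.sqrt (1 - (1 - c * α₁ ^ 2)) = Real.sqrt c * α₁ := by
    rw [show 1 - (1 - c * α₁ ^ 2) = c * α₁ ^ 2 by ring, Real.sqrt_mul hc.le,
      Real.sqrt_sq hα₁]
  have hsd : 2 * s * D = c * α₁ ^ 2 * e := by
    rw [hD]; field_simp
  have h2 : Real.sqrt (1 - e * (1 - c * α₁ ^ 2)) ≤ s + D := by
    have key : 1 - e * (1 - c * α₁ ^ 2) ≤ (s + D) ^ 2 := by
      nlinarith [sq_nonneg D]
    calc Real.sqrt (1 - e * (1 - c * α₁ ^ 2)) ≤ Real.sqrt ((s + D) ^ 2) :=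
          Real.sqrt_le_sqrt key
      _ = s + D := Real.sqrt_sq (by positivity)
  set P := 1 - Real.sqrt c * α₁ - D with hP
  have hprod : (1 - s / 2) * P ≤ 1 - (Real.sqrt c * α₁ + (s + D)) / 2 := by
    rw [hP]
    nlinarith [mul_nonneg (sub_nonneg.mpr hs1) (add_nonneg hca hD0)]
  have hXpos : 0 < Real.exp β * (1 - s / 2) := by
    have : 0 < 1 - s / 2 := by linarith
    positivity
  have hstep : Real.exp β * (1 - s / 2) * P ≤
      Real.exp β * (1 - (Real.sqrt (1 - (1 - c * α₁ ^ 2)) +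
        Real.sqrt (1 - e * (1 - c * α₁ ^ 2))) / 2) := by
    rw [h1, mul_assoc]
    apply mul_le_mul_of_nonneg_left _ (Real.exp_pos β).le
    have : 1 - (Real.sqrt c * α₁ + (s + D)) / 2 ≤
        1 - (Real.sqrt c * α₁ + Real.sqrt (1 - e * (1 - c * α₁ ^ 2))) / 2 := by
      linarith
    linarith [hprod]
  have hPpos : 0 < P := hpos
  rw [← Real.log_mul (ne_of_gt hXpos) (ne_of_gt hPpos)]
  exact Real.log_le_log (by positivity) hstep
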